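/- Let Z ∈ ℝ^{a×b} and (A,B) any factorization of a best rank-r approximation of Z, i.e., AB = LR_r(Z). Then σ_r(A)·σ_r(B) ≤ σ_r(Z), with equality when AᵀA = BBᵀ. -/

import Mathlib

open Matrix

open Matrix

theorem Matrix.isHermitian_transpose_mul_self {m n : ℕ} (M : Matrix (Fin m) (Fin n) ℝ) :
    (Mᵀ * M).IsHermitian := by
  simpa using Matrix.isHermitian_conjTranspose_mul_self M

/-- The `i`-th largest singular value (0-indexed) of a real matrix `M`: the square root of
the `i`-th largest eigenvalue of `MᴴM`. -/
noncomputable def sv {m n : ℕ} (M : Matrix (Fin m) (Fin n) ℝ) (i : Fin n) : ℝ :=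
  Real.sqrt
    (((Matrix.isHermitian_transpose_mul_self M).eigenvalues ∘
      ⇑(Tuple.sort (Matrix.isHermitian_transpose_mul_self M).eigenvalues)) i.rev)

/-!
Let `S = AᵀA` have eigenvalues `ν₁ ≥ ⋯ ≥ ν_r`, so `σ_r(A)² = ν_r`. Comparing `AB` with the rank-`r`
competitors `(A - tE)B`, `E = (Z - AB)Bᵀ`, gives the first-order condition `(Z - AB)Bᵀ = 0`: `Z`
and `AB` agree on `range Bᵀ`. If `σ_r(B) > 0`, the top `r` eigenvectors of `BᵀB` span a subspace
of `range Bᵀ` on which `‖Zx‖² = ‖ABx‖² ≥ σ_r(A)² σ_r(B)² ‖x‖²`, and Courant–Fischer bounds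
`σ_r(Z)²` below by `σ_r(A)² σ_r(B)²`.

If moreover `S = BBᵀ`, then `ZBᵀ = AS`, and `Bᵀ` maps the eigenvectors of `S` with eigenvalue at
least `ν_k` injectively onto a subspace where `‖Zx‖² ≥ ν_k² ‖x‖²`; Courant–Fischer gives
`ν_k² ≤ σ_k(Z)²`. Comparing `AB` with the projection of `Z` onto its top `r` right singular
vectors gives `∑ σ_k(Z)² ≤ ‖AB‖_F² = tr S² = ∑ ν_k²`, so all these inequalities are equalities and
`σ_r(Z) = ν_r = σ_r(A)²`. The same transfer argument for `BᵀB` gives `σ_r(A) ≤ σ_r(B)`, whence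
`σ_r(Z) ≤ σ_r(A) σ_r(B)`.
-/

namespace Matrix.IsHermitian

variable {n : ℕ} {M : Matrix (Fin n) (Fin n) ℝ} (hM : M.IsHermitian)

noncomputable def ascEigenvalues : Fin n → ℝ :=
  hM.eigenvalues ∘ Tuple.sort hM.eigenvalues

noncomputable def ascEigenvectorMatrix : Matrix (Fin n) (Fin n) ℝ :=
  (hM.eigenvectorUnitary : Matrix (Fin n) (Fin n) ℝ).submatrix id (Tuple.sort hM.eigenvalues)

local notation "λ↑" => hM.ascEigenvalues
local notation "V" => hM.ascEigenvectorMatrix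

theorem monotone_ascEigenvalues : Monotone λ↑ :=
  Tuple.monotone_sort hM.eigenvalues

theorem ascEigenvectorMatrix_transpose_mul_self : Vᵀ * V = 1 := by
  have hU := Unitary.coe_star_mul_self hM.eigenvectorUnitary
  rw [star_eq_conjTranspose, conjTranspose_eq_transpose_of_trivial] at hU
  rw [ascEigenvectorMatrix, transpose_submatrix, ← submatrix_mul _ _ _ _ _ Function.bijective_id,
    hU, submatrix_one_equiv]

theorem ascEigenvectorMatrix_mul_transpose_self : V * Vᵀ = 1 :=
  mul_eq_one_comm.mp hM.ascEigenvectorMatrix_transpose_mul_self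

theorem mul_ascEigenvectorMatrix : M * V = V * diagonal λ↑ := by
  ext i k
  rw [mul_diagonal, mul_comm]
  exact congrFun (hM.mulVec_eigenvectorBasis (Tuple.sort hM.eigenvalues k)) i

theorem transpose_mul_mul_ascEigenvectorMatrix : Vᵀ * M * V = diagonal λ↑ := by
  rw [Matrix.mul_assoc, hM.mul_ascEigenvectorMatrix, ← Matrix.mul_assoc,
    hM.ascEigenvectorMatrix_transpose_mul_self, Matrix.one_mul]

theorem eq_ascEigenvectorMatrix_mul_diagonal_mul_transpose : M = V * diagonal λ↑ * Vᵀ := by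
  rw [← hM.mul_ascEigenvectorMatrix, Matrix.mul_assoc, hM.ascEigenvectorMatrix_mul_transpose_self,
    Matrix.mul_one]

theorem pow_eq_ascEigenvectorMatrix_mul_diagonal_mul_transpose (m : ℕ) :
    M ^ m = V * diagonal (λ↑ ^ m) * Vᵀ := by
  induction m with
  | zero => simp [hM.ascEigenvectorMatrix_mul_transpose_self]
  | succ m ih =>
    rw [pow_succ, ih]
    conv_lhs => arg 2; rw [hM.eq_ascEigenvectorMatrix_mul_diagonal_mul_transpose]
    simp only [Matrix.mul_assoc]
    rw [← Matrix.mul_assoc Vᵀ V, hM.ascEigenvectorMatrix_transpose_mul_self, Matrix.one_mul,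
      ← Matrix.mul_assoc (diagonal _), diagonal_mul_diagonal, pow_succ]
    rfl

theorem trace_pow (m : ℕ) : (M ^ m).trace = ∑ k, λ↑ k ^ m := by
  rw [hM.pow_eq_ascEigenvectorMatrix_mul_diagonal_mul_transpose, trace_mul_cycle,
    hM.ascEigenvectorMatrix_transpose_mul_self, Matrix.one_mul, trace_diagonal]
  rfl

theorem dotProduct_pow_mulVec (x : Fin n → ℝ) (m : ℕ) :
    x ⬝ᵥ (M ^ m *ᵥ x) = ∑ k, λ↑ k ^ m * (Vᵀ *ᵥ x) k ^ 2 := by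
  rw [hM.pow_eq_ascEigenvectorMatrix_mul_diagonal_mul_transpose, ← mulVec_mulVec, ← mulVec_mulVec,
    dotProduct_mulVec, ← mulVec_transpose]
  simp only [dotProduct, mulVec_diagonal, Pi.pow_apply]
  exact Finset.sum_congr rfl fun k _ => by ring

theorem dotProduct_self_eq_sum (x : Fin n → ℝ) : x ⬝ᵥ x = ∑ k, (Vᵀ *ᵥ x) k ^ 2 := by
  simpa using hM.dotProduct_pow_mulVec x 0

theorem pow_mulVec_dotProduct_pow_mulVec (hM : M.IsHermitian) (x : Fin n → ℝ) (i j : ℕ) :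
    (M ^ i *ᵥ x) ⬝ᵥ (M ^ j *ᵥ x) = x ⬝ᵥ (M ^ (i + j) *ᵥ x) := by
  have hT : (M ^ i)ᵀ = M ^ i := by
    rw [transpose_pow, ← conjTranspose_eq_transpose_of_trivial, (hM : Mᴴ = M)]
  rw [← hT, ← vecMul_transpose, transpose_transpose, ← dotProduct_mulVec, mulVec_mulVec, pow_add]

theorem mulVec_ascEigenvector (k : Fin n) : M *ᵥ Vᵀ k = λ↑ k • Vᵀ k := by
  ext i
  rw [Pi.smul_apply, smul_eq_mul, mul_comm]
  exact (congrFun (congrFun hM.mul_ascEigenvectorMatrix i) k).trans (mul_diagonal _ _ i k)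

noncomputable def eigenspan (s : Finset (Fin n)) : Submodule ℝ (Fin n → ℝ) :=
  Submodule.span ℝ (Vᵀ.row '' s)

theorem finrank_eigenspan (s : Finset (Fin n)) :
    Module.finrank ℝ (hM.eigenspan s) = s.card := by
  have hV : IsUnit Vᵀ := (isUnit_iff_isUnit_det _).2
    (isUnit_det_of_right_inverse hM.ascEigenvectorMatrix_transpose_mul_self)
  have hli := (linearIndependent_rows_of_isUnit hV).comp ((↑) : s → Fin n) Subtype.val_injective
  rw [eigenspan, Set.image_eq_range]
  exact (finrank_span_eq_card hli).trans (Fintype.card_coe s)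

theorem mulVec_apply_eq_zero_of_mem_eigenspan {s : Finset (Fin n)} {x : Fin n → ℝ}
    (hx : x ∈ hM.eigenspan s) {k : Fin n} (hk : k ∉ s) : (Vᵀ *ᵥ x) k = 0 := by
  induction hx using Submodule.span_induction with
  | mem y hy =>
    obtain ⟨j, hj, rfl⟩ := hy
    have hkj : k ≠ j := fun h => hk (h ▸ hj)
    change (Vᵀ * V) k j = 0
    rw [hM.ascEigenvectorMatrix_transpose_mul_self, one_apply_ne hkj]
  | zero => simp
  | add y z _ _ hy hz => simp [mulVec_add, hy, hz]
  | smul c y _ hy => simp [mulVec_smul, hy]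

theorem ascEigenvalues_le_of_mem_eigenspan_Ici {K : Fin n} {x : Fin n → ℝ}
    (hx : x ∈ hM.eigenspan (Finset.Ici K)) {k : Fin n} (hk : (Vᵀ *ᵥ x) k ≠ 0) : λ↑ K ≤ λ↑ k := by
  refine hM.monotone_ascEigenvalues (Finset.mem_Ici.1 ?_)
  by_contra hkK
  exact hk (hM.mulVec_apply_eq_zero_of_mem_eigenspan hx hkK)

theorem ascEigenvalues_le_of_mem_eigenspan_Iic {K : Fin n} {x : Fin n → ℝ}
    (hx : x ∈ hM.eigenspan (Finset.Iic K)) {k : Fin n} (hk : (Vᵀ *ᵥ x) k ≠ 0) : λ↑ k ≤ λ↑ K := by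
  refine hM.monotone_ascEigenvalues (Finset.mem_Iic.1 ?_)
  by_contra hkK
  exact hk (hM.mulVec_apply_eq_zero_of_mem_eigenspan hx hkK)

theorem eigenspan_le_range {s : Finset (Fin n)} (hs : ∀ k ∈ s, λ↑ k ≠ 0) :
    hM.eigenspan s ≤ LinearMap.range M.mulVecLin := by
  rw [eigenspan, Submodule.span_le]
  rintro _ ⟨k, hk, rfl⟩
  refine ⟨(λ↑ k)⁻¹ • Vᵀ k, ?_⟩
  rw [mulVecLin_apply, mulVec_smul, hM.mulVec_ascEigenvector, smul_smul, inv_mul_cancel₀ (hs k hk),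
    one_smul, row_apply']

theorem pow_mul_dotProduct_pow_mulVec_le {α : ℝ} (hα : 0 ≤ α) {x : Fin n → ℝ}
    (hx : ∀ k, (Vᵀ *ᵥ x) k ≠ 0 → α ≤ λ↑ k) (m j : ℕ) :
    α ^ j * (x ⬝ᵥ (M ^ m *ᵥ x)) ≤ x ⬝ᵥ (M ^ (m + j) *ᵥ x) := by
  rw [hM.dotProduct_pow_mulVec, hM.dotProduct_pow_mulVec, Finset.mul_sum]
  refine Finset.sum_le_sum fun k _ => ?_
  by_cases hk : (Vᵀ *ᵥ x) k = 0
  · simp [hk]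
  have hαk := hx k hk
  rw [pow_add, ← mul_assoc, mul_comm (α ^ j)]
  gcongr
  exact pow_nonneg (hα.trans hαk) m

theorem mul_dotProduct_self_le {α : ℝ} (hα : 0 ≤ α) {x : Fin n → ℝ}
    (hx : ∀ k, (Vᵀ *ᵥ x) k ≠ 0 → α ≤ λ↑ k) : α * (x ⬝ᵥ x) ≤ x ⬝ᵥ (M *ᵥ x) := by
  simpa using hM.pow_mul_dotProduct_pow_mulVec_le hα hx 0 1

theorem dotProduct_mulVec_le {α : ℝ} {x : Fin n → ℝ} (hx : ∀ k, (Vᵀ *ᵥ x) k ≠ 0 → λ↑ k ≤ α) :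
    x ⬝ᵥ (M *ᵥ x) ≤ α * (x ⬝ᵥ x) := by
  have h := hM.dotProduct_pow_mulVec x 1
  rw [pow_one] at h
  rw [h, hM.dotProduct_self_eq_sum, Finset.mul_sum]
  refine Finset.sum_le_sum fun k _ => ?_
  by_cases hk : (Vᵀ *ᵥ x) k = 0
  · simp [hk]
  · simp only [pow_one]
    gcongr
    exact hx k hk

theorem le_ascEigenvalues_of_forall_mem {α : ℝ} {K : Fin n} (U : Submodule ℝ (Fin n → ℝ))
    (hU : n - K ≤ Module.finrank ℝ U) (h : ∀ x ∈ U, α * (x ⬝ᵥ x) ≤ x ⬝ᵥ (M *ᵥ x)) :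
    α ≤ λ↑ K := by
  set W := hM.eigenspan (Finset.Iic K)
  have hW : Module.finrank ℝ W = K + 1 := by rw [hM.finrank_eigenspan, Fin.card_Iic]
  have hsup : Module.finrank ℝ ↥(U ⊔ W) ≤ n := by simpa using (U ⊔ W).finrank_le
  have hinf : 0 < Module.finrank ℝ ↥(U ⊓ W) := by
    have := Submodule.finrank_sup_add_finrank_inf_eq U W
    omega
  obtain ⟨⟨x, hxU, hxW⟩, hx0⟩ := Module.finrank_pos_iff_exists_ne_zero.1 hinf
  have hx : 0 < x ⬝ᵥ x := lt_of_le_of_ne (Finset.sum_nonneg fun i _ => mul_self_nonneg (x i))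
    (Ne.symm (dotProduct_self_eq_zero.not.2 fun h => hx0 (by simp [h])))
  have hupper : x ⬝ᵥ (M *ᵥ x) ≤ λ↑ K * (x ⬝ᵥ x) := hM.dotProduct_mulVec_le fun k hk =>
    hM.ascEigenvalues_le_of_mem_eigenspan_Iic hxW hk
  exact le_of_mul_le_mul_right ((h x hxU).trans hupper) hx

theorem submatrix_transpose_mul_self {ι : Type*} [Fintype ι] [DecidableEq ι] (f : ι ↪ Fin n) :
    (Matrix.submatrix V id f)ᵀ * Matrix.submatrix V id f = 1 := by
  rw [transpose_submatrix, ← submatrix_mul _ _ _ _ _ Function.bijective_id,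
    hM.ascEigenvectorMatrix_transpose_mul_self, submatrix_one_embedding]

theorem trace_submatrix_transpose_mul_mul {ι : Type*} [Fintype ι] (f : ι → Fin n) :
    ((Matrix.submatrix V id f)ᵀ * M * Matrix.submatrix V id f).trace = ∑ k, λ↑ (f k) := by
  have h : (Vᵀ * M * V).submatrix f f =
      (Matrix.submatrix V id f)ᵀ * M * Matrix.submatrix V id f := by
    rw [submatrix_mul _ _ _ id _ Function.bijective_id, submatrix_mul _ _ _ id _
      Function.bijective_id, submatrix_id_id, transpose_submatrix]
  rw [← h, hM.transpose_mul_mul_ascEigenvectorMatrix]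
  simp [trace]

end Matrix.IsHermitian

theorem Matrix.ascEigenvalues_transpose_mul_self_nonneg {m n : ℕ} (X : Matrix (Fin m) (Fin n) ℝ)
    (k : Fin n) : 0 ≤ (isHermitian_transpose_mul_self X).ascEigenvalues k :=
  (posSemidef_conjTranspose_mul_self X).eigenvalues_nonneg _

theorem Matrix.dotProduct_mulVec_transpose_mul_self {m n : Type*} [Fintype m] [Fintype n]
    (X : Matrix m n ℝ) (v : n → ℝ) : v ⬝ᵥ ((Xᵀ * X) *ᵥ v) = (X *ᵥ v) ⬝ᵥ (X *ᵥ v) := by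
  rw [← mulVec_mulVec, dotProduct_mulVec, vecMul_transpose]

theorem Matrix.dotProduct_mulVec_mul_transpose_self {m n : Type*} [Fintype m] [Fintype n]
    (X : Matrix m n ℝ) (v : m → ℝ) : v ⬝ᵥ ((X * Xᵀ) *ᵥ v) = (Xᵀ *ᵥ v) ⬝ᵥ (Xᵀ *ᵥ v) := by
  simpa using dotProduct_mulVec_transpose_mul_self Xᵀ v

section Frobenius

variable {m n : Type*} [Fintype m] [Fintype n]

theorem Matrix.sum_sum_sq_eq_trace (X : Matrix m n ℝ) : ∑ i, ∑ j, X i j ^ 2 = (Xᵀ * X).trace := by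
  simp only [trace, diag_apply, mul_apply, transpose_apply, sq]
  exact Finset.sum_comm

theorem Matrix.trace_transpose_mul_self_add (X Y : Matrix m n ℝ) :
    ((X + Y)ᵀ * (X + Y)).trace = (Xᵀ * X).trace + 2 * (Xᵀ * Y).trace + (Yᵀ * Y).trace := by
  have h : (Yᵀ * X).trace = (Xᵀ * Y).trace := by
    rw [← trace_transpose, transpose_mul, transpose_transpose]
  simp only [transpose_add, Matrix.add_mul, Matrix.mul_add, trace_add, h]
  ring

theorem Matrix.trace_transpose_mul_mul {o : Type*} [Fintype o] (X : Matrix m n ℝ)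
    (P : Matrix m o ℝ) (B : Matrix o n ℝ) : (Xᵀ * (P * B)).trace = ((X * Bᵀ)ᵀ * P).trace := by
  rw [← Matrix.mul_assoc, trace_mul_comm, transpose_mul, transpose_transpose, Matrix.mul_assoc]

theorem Matrix.trace_transpose_mul_self_sub_mul_mul_transpose {ι : Type*} [Fintype ι]
    [DecidableEq ι] (Z : Matrix m n ℝ) {W : Matrix n ι ℝ} (hW : Wᵀ * W = 1) :
    ((Z - Z * W * Wᵀ)ᵀ * (Z - Z * W * Wᵀ)).trace = (Zᵀ * Z).trace - (Wᵀ * (Zᵀ * Z) * W).trace := by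
  have hτ : ((Z * W * Wᵀ)ᵀ * (Z * W * Wᵀ)).trace = (Wᵀ * (Zᵀ * Z) * W).trace := by
    have h : (Z * W * Wᵀ)ᵀ * (Z * W * Wᵀ) = W * (Wᵀ * (Zᵀ * Z) * W) * Wᵀ := by
      simp only [transpose_mul, transpose_transpose, Matrix.mul_assoc]
    rw [h, trace_mul_comm, ← Matrix.mul_assoc, ← Matrix.mul_assoc, hW, Matrix.one_mul]
  have hcross : (Zᵀ * (Z * W * Wᵀ)).trace = (Wᵀ * (Zᵀ * Z) * W).trace := by
    have h : Zᵀ * (Z * W * Wᵀ) = Zᵀ * Z * W * Wᵀ := by simp only [Matrix.mul_assoc]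
    rw [h, trace_mul_comm]
    simp only [Matrix.mul_assoc]
  rw [sub_eq_add_neg, trace_transpose_mul_self_add, Matrix.mul_neg, trace_neg, transpose_neg,
    Matrix.neg_mul, Matrix.mul_neg, neg_neg, hτ, hcross]
  ring

end Frobenius

section LowRank

variable {m n : Type*} [Fintype m] [Fintype n] {r : ℕ}

def IsBestRankFactorization (Z : Matrix m n ℝ) (A : Matrix m (Fin r) ℝ) (B : Matrix (Fin r) n ℝ) :
    Prop :=
  ∀ C : Matrix m n ℝ, C.rank ≤ r →
    ∑ i, ∑ j, (Z i j - (A * B) i j) ^ 2 ≤ ∑ i, ∑ j, (Z i j - C i j) ^ 2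

variable {Z : Matrix m n ℝ} {A : Matrix m (Fin r) ℝ} {B : Matrix (Fin r) n ℝ}

namespace IsBestRankFactorization

theorem trace_le (h : IsBestRankFactorization Z A B) {C : Matrix m n ℝ} (hC : C.rank ≤ r) :
    ((Z - A * B)ᵀ * (Z - A * B)).trace ≤ ((Z - C)ᵀ * (Z - C)).trace := by
  simpa only [← sum_sum_sq_eq_trace, Matrix.sub_apply] using h C hC

theorem sub_mul_mul_transpose_eq_zero (h : IsBestRankFactorization Z A B) :
    (Z - A * B) * Bᵀ = 0 := by
  set E := (Z - A * B) * Bᵀ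
  have hquad : ∀ t : ℝ,
      0 ≤ ((E * B)ᵀ * (E * B)).trace * (t * t) + 2 * (Eᵀ * E).trace * t + 0 := by
    intro t
    have hrank : ((A - t • E) * B).rank ≤ r :=
      (rank_mul_le_right _ _).trans ((rank_le_card_height B).trans (Fintype.card_fin r).le)
    have hZ : Z - (A - t • E) * B = (Z - A * B) + t • (E * B) := by
      rw [Matrix.sub_mul, Matrix.smul_mul]
      abel
    have hopt := h.trace_le hrank
    -- moving `A` along `E` changes the error by `2t‖E‖² + t²‖EB‖²`,
    -- since `tr ((Z - AB)ᵀ E B) = tr (EᵀE)`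
    rw [hZ, trace_transpose_mul_self_add, Matrix.mul_smul, trace_smul, trace_transpose_mul_mul,
      transpose_smul, Matrix.smul_mul, Matrix.mul_smul, trace_smul, trace_smul, smul_eq_mul,
      smul_eq_mul, smul_eq_mul] at hopt
    linarith
  have hdisc := discrim_le_zero hquad
  rw [discrim] at hdisc
  have he : (Eᵀ * E).trace = 0 := by nlinarith
  rw [← conjTranspose_eq_transpose_of_trivial] at he
  exact trace_conjTranspose_mul_self_eq_zero_iff.1 he

end IsBestRankFactorization

end LowRank

section Factorization

variable {a b r : ℕ} {Z : Matrix (Fin a) (Fin b) ℝ} {A : Matrix (Fin a) (Fin r) ℝ}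
  {B : Matrix (Fin r) (Fin b) ℝ}

local notation "λ[" X "]" => Matrix.IsHermitian.ascEigenvalues (isHermitian_transpose_mul_self X)

theorem IsBestRankFactorization.sum_ascEigenvalues_le (h : IsBestRankFactorization Z A B)
    (hrb : r ≤ b) :
    ∑ k : Fin r, λ[Z] ⟨b - r + k, by omega⟩ ≤ ((A * B)ᵀ * (A * B)).trace := by
  set hZ := isHermitian_transpose_mul_self Z
  let f : Fin r ↪ Fin b :=
    ⟨fun k => ⟨b - r + k, by omega⟩, fun k l hkl => Fin.ext (by simpa using congrArg Fin.val hkl)⟩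
  set W := hZ.ascEigenvectorMatrix.submatrix id f
  have hW : Wᵀ * W = 1 := hZ.submatrix_transpose_mul_self f
  have hτ : (Wᵀ * (Zᵀ * Z) * W).trace = ∑ k : Fin r, λ[Z] ⟨b - r + k, by omega⟩ :=
    hZ.trace_submatrix_transpose_mul_mul f
  -- the competitor `Z W Wᵀ` projects `Z` onto its top `r` right singular vectors
  have hrank : (Z * W * Wᵀ).rank ≤ r :=
    (rank_mul_le_left _ _).trans ((rank_le_card_width _).trans (Fintype.card_fin r).le)
  have hopt := h.trace_le hrank
  rw [trace_transpose_mul_self_sub_mul_mul_transpose Z hW, hτ] at hopt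
  have hpyth : (Zᵀ * Z).trace
      = ((Z - A * B)ᵀ * (Z - A * B)).trace + ((A * B)ᵀ * (A * B)).trace := by
    conv_lhs => rw [← sub_add_cancel Z (A * B)]
    rw [trace_transpose_mul_self_add, trace_transpose_mul_mul, h.sub_mul_mul_transpose_eq_zero,
      transpose_zero, Matrix.zero_mul, trace_zero]
    ring
  linarith

theorem ascEigenvalues_zero_mul_le (hr : 0 < r) (hrb : r ≤ b) (hZB : (Z - A * B) * Bᵀ = 0) :
    λ[A] ⟨0, hr⟩ * λ[B] ⟨b - r, by omega⟩ ≤ λ[Z] ⟨b - r, by omega⟩ := by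
  set hA := isHermitian_transpose_mul_self A
  set hB := isHermitian_transpose_mul_self B
  have hν := ascEigenvalues_transpose_mul_self_nonneg A ⟨0, hr⟩
  rcases (ascEigenvalues_transpose_mul_self_nonneg B ⟨b - r, by omega⟩).eq_or_lt with hμ | hμ
  · rw [← hμ, mul_zero]
    exact ascEigenvalues_transpose_mul_self_nonneg Z _
  refine (isHermitian_transpose_mul_self Z).le_ascEigenvalues_of_forall_mem
    (hB.eigenspan (Finset.Ici ⟨b - r, by omega⟩)) (by rw [hB.finrank_eigenspan, Fin.card_Ici])
    fun x hx => ?_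
  -- the top eigenvectors of `BᵀB` lie in `range (BᵀB)`, which `Z - AB` annihilates
  have hZx : Z *ᵥ x = A *ᵥ (B *ᵥ x) := by
    obtain ⟨w, rfl⟩ := hB.eigenspan_le_range (fun k hk =>
      (hμ.trans_le (hB.monotone_ascEigenvalues (Finset.mem_Ici.1 hk))).ne') hx
    have h0 : (Z - A * B) *ᵥ ((Bᵀ * B) *ᵥ w) = 0 := by
      rw [mulVec_mulVec, ← Matrix.mul_assoc, hZB, Matrix.zero_mul, zero_mulVec]
    rwa [sub_mulVec, sub_eq_zero, ← mulVec_mulVec (_ *ᵥ w) A] at h0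
  rw [dotProduct_mulVec_transpose_mul_self Z, hZx, ← dotProduct_mulVec_transpose_mul_self A,
    mul_assoc]
  calc λ[A] ⟨0, hr⟩ * (λ[B] ⟨b - r, _⟩ * (x ⬝ᵥ x))
      ≤ λ[A] ⟨0, hr⟩ * (x ⬝ᵥ ((Bᵀ * B) *ᵥ x)) := by
        gcongr
        exact hB.mul_dotProduct_self_le hμ.le fun k hk =>
          hB.ascEigenvalues_le_of_mem_eigenspan_Ici hx hk
    _ = λ[A] ⟨0, hr⟩ * ((B *ᵥ x) ⬝ᵥ (B *ᵥ x)) := by rw [dotProduct_mulVec_transpose_mul_self]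
    _ ≤ (B *ᵥ x) ⬝ᵥ ((Aᵀ * A) *ᵥ (B *ᵥ x)) :=
        hA.mul_dotProduct_self_le hν fun k _ => hA.monotone_ascEigenvalues (Nat.zero_le k.val)

theorem finrank_map_eigenspan_Ici (hAB : Aᵀ * A = B * Bᵀ) {k : Fin r} (hk : 0 < λ[A] k) :
    Module.finrank ℝ (((isHermitian_transpose_mul_self A).eigenspan (Finset.Ici k)).map
      Bᵀ.mulVecLin) = r - k := by
  set hA := isHermitian_transpose_mul_self A
  have hinj : Function.Injective (Bᵀ.mulVecLin.domRestrict (hA.eigenspan (Finset.Ici k))) := by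
    rw [injective_iff_map_eq_zero]
    rintro ⟨y, hy⟩ hy0
    have hBy : Bᵀ *ᵥ y = 0 := hy0
    have hle : λ[A] k * (y ⬝ᵥ y) ≤ 0 := (hA.mul_dotProduct_self_le hk.le fun l hl =>
      hA.ascEigenvalues_le_of_mem_eigenspan_Ici hy hl).trans_eq
        (by rw [hAB, dotProduct_mulVec_mul_transpose_self, hBy, zero_dotProduct])
    have hyy : y ⬝ᵥ y = 0 := le_antisymm (nonpos_of_mul_nonpos_right hle hk)
      (Finset.sum_nonneg fun i _ => mul_self_nonneg (y i))
    exact Subtype.ext (dotProduct_self_eq_zero.1 hyy)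
  rw [← LinearMap.range_domRestrict, LinearMap.finrank_range_of_inj hinj, hA.finrank_eigenspan,
    Fin.card_Ici]

theorem ascEigenvalues_zero_le (hr : 0 < r) (hrb : r ≤ b) (hAB : Aᵀ * A = B * Bᵀ) :
    λ[A] ⟨0, hr⟩ ≤ λ[B] ⟨b - r, by omega⟩ := by
  set hA := isHermitian_transpose_mul_self A
  rcases (ascEigenvalues_transpose_mul_self_nonneg A ⟨0, hr⟩).eq_or_lt with hν | hν
  · rw [← hν]
    exact ascEigenvalues_transpose_mul_self_nonneg B _
  refine (isHermitian_transpose_mul_self B).le_ascEigenvalues_of_forall_mem _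
    (by rw [finrank_map_eigenspan_Ici hAB hν]; dsimp only; omega) ?_
  rintro _ ⟨y, hy, rfl⟩
  have hnorm : (Bᵀ *ᵥ y) ⬝ᵥ (Bᵀ *ᵥ y) = y ⬝ᵥ ((Aᵀ * A) ^ 1 *ᵥ y) := by
    rw [pow_one, hAB, dotProduct_mulVec_mul_transpose_self]
  have hquad : (Bᵀ *ᵥ y) ⬝ᵥ ((Bᵀ * B) *ᵥ (Bᵀ *ᵥ y)) = y ⬝ᵥ ((Aᵀ * A) ^ (1 + 1) *ᵥ y) := by
    rw [← hA.pow_mulVec_dotProduct_pow_mulVec, pow_one, hAB, dotProduct_mulVec_transpose_mul_self,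
      mulVec_mulVec]
  rw [mulVecLin_apply, hnorm, hquad, ← pow_one (λ[A] _)]
  exact hA.pow_mul_dotProduct_pow_mulVec_le hν.le
    (fun l hl => hA.ascEigenvalues_le_of_mem_eigenspan_Ici hy hl) 1 1

theorem sq_ascEigenvalues_le (hrb : r ≤ b) (hZB : (Z - A * B) * Bᵀ = 0)
    (hAB : Aᵀ * A = B * Bᵀ) (k : Fin r) :
    λ[A] k ^ 2 ≤ λ[Z] ⟨b - r + k, by omega⟩ := by
  set hA := isHermitian_transpose_mul_self A
  rcases (ascEigenvalues_transpose_mul_self_nonneg A k).eq_or_lt with hν | hν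
  · rw [← hν, sq, zero_mul]
    exact ascEigenvalues_transpose_mul_self_nonneg Z _
  refine (isHermitian_transpose_mul_self Z).le_ascEigenvalues_of_forall_mem _
    (by rw [finrank_map_eigenspan_Ici hAB hν]; dsimp only; omega) ?_
  rintro _ ⟨y, hy, rfl⟩
  have hZB' : Z * Bᵀ = A * (Aᵀ * A) := by
    rw [hAB, ← Matrix.mul_assoc, ← sub_eq_zero, ← Matrix.sub_mul, hZB]
  have hnorm : (Bᵀ *ᵥ y) ⬝ᵥ (Bᵀ *ᵥ y) = y ⬝ᵥ ((Aᵀ * A) ^ 1 *ᵥ y) := by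
    rw [pow_one, hAB, dotProduct_mulVec_mul_transpose_self]
  have hquad : (Bᵀ *ᵥ y) ⬝ᵥ ((Zᵀ * Z) *ᵥ (Bᵀ *ᵥ y)) = y ⬝ᵥ ((Aᵀ * A) ^ (1 + 2) *ᵥ y) := by
    rw [← hA.pow_mulVec_dotProduct_pow_mulVec, pow_one, sq, ← mulVec_mulVec y (Aᵀ * A),
      dotProduct_mulVec_transpose_mul_self Z, mulVec_mulVec y Z, hZB', ← mulVec_mulVec y A,
      ← dotProduct_mulVec_transpose_mul_self A]
  rw [mulVecLin_apply, hnorm, hquad]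
  exact hA.pow_mul_dotProduct_pow_mulVec_le hν.le
    (fun l hl => hA.ascEigenvalues_le_of_mem_eigenspan_Ici hy hl) 1 2

theorem trace_transpose_mul_self_mul_eq_sum_sq (hAB : Aᵀ * A = B * Bᵀ) :
    ((A * B)ᵀ * (A * B)).trace = ∑ k, λ[A] k ^ 2 := by
  rw [transpose_mul, Matrix.mul_assoc, ← Matrix.mul_assoc Aᵀ, trace_mul_comm, Matrix.mul_assoc,
    ← hAB, ← sq, (isHermitian_transpose_mul_self A).trace_pow]

theorem IsBestRankFactorization.ascEigenvalues_eq_sq (h : IsBestRankFactorization Z A B)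
    (hr : 0 < r) (hrb : r ≤ b) (hAB : Aᵀ * A = B * Bᵀ) :
    λ[Z] ⟨b - r, by omega⟩ = λ[A] ⟨0, hr⟩ ^ 2 := by
  have hle := fun k (_ : k ∈ Finset.univ) =>
    sq_ascEigenvalues_le hrb h.sub_mul_mul_transpose_eq_zero hAB k
  have hsum : ∑ k, λ[A] k ^ 2 = ∑ k : Fin r, λ[Z] ⟨b - r + k, by omega⟩ :=
    le_antisymm (Finset.sum_le_sum hle)
      ((h.sum_ascEigenvalues_le hrb).trans_eq (trace_transpose_mul_self_mul_eq_sum_sq hAB))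
  exact ((Finset.sum_eq_sum_iff_of_le hle).1 hsum ⟨0, hr⟩ (Finset.mem_univ _)).symm

theorem sv_eq_sqrt_ascEigenvalues {m n : ℕ} (M : Matrix (Fin m) (Fin n) ℝ) {i k : Fin n}
    (h : i.val + k.val + 1 = n) : sv M i = √(λ[M] k) := by
  have hk : i.rev = k := Fin.ext (by rw [Fin.val_rev]; omega)
  rw [← hk]
  rfl

end Factorization

theorem stmt12_general {a b r : ℕ} (hr : 0 < r) (hrb : r ≤ b)
    (Z : Matrix (Fin a) (Fin b) ℝ)
    (A : Matrix (Fin a) (Fin r) ℝ) (B : Matrix (Fin r) (Fin b) ℝ)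
    (hbest : ∀ C : Matrix (Fin a) (Fin b) ℝ, C.rank ≤ r →
      ∑ i, ∑ j, (Z i j - (A * B) i j) ^ 2 ≤ ∑ i, ∑ j, (Z i j - C i j) ^ 2) :
    sv A ⟨r - 1, Nat.sub_lt hr one_pos⟩ *
        sv B ⟨r - 1, lt_of_lt_of_le (Nat.sub_lt hr one_pos) hrb⟩
      ≤ sv Z ⟨r - 1, lt_of_lt_of_le (Nat.sub_lt hr one_pos) hrb⟩ ∧
    (Aᵀ * A = B * Bᵀ →
      sv A ⟨r - 1, Nat.sub_lt hr one_pos⟩ *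
          sv B ⟨r - 1, lt_of_lt_of_le (Nat.sub_lt hr one_pos) hrb⟩
        = sv Z ⟨r - 1, lt_of_lt_of_le (Nat.sub_lt hr one_pos) hrb⟩) := by
  have hopt : IsBestRankFactorization Z A B := hbest
  have hν := ascEigenvalues_transpose_mul_self_nonneg A ⟨0, hr⟩
  rw [sv_eq_sqrt_ascEigenvalues A (k := ⟨0, hr⟩) (by dsimp only; omega),
    sv_eq_sqrt_ascEigenvalues B (k := ⟨b - r, by omega⟩) (by dsimp only; omega),
    sv_eq_sqrt_ascEigenvalues Z (k := ⟨b - r, by omega⟩) (by dsimp only; omega),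
    ← Real.sqrt_mul hν]
  have hle := ascEigenvalues_zero_mul_le hr hrb hopt.sub_mul_mul_transpose_eq_zero
  refine ⟨Real.sqrt_le_sqrt hle, fun hAB => le_antisymm (Real.sqrt_le_sqrt hle) ?_⟩
  rw [hopt.ascEigenvalues_eq_sq hr hrb hAB, Real.sqrt_sq hν]
  exact (Real.sqrt_mul_self hν).symm.le.trans
    (Real.sqrt_le_sqrt (mul_le_mul_of_nonneg_left (ascEigenvalues_zero_le hr hrb hAB) hν))

/-- If `AB` is a best rank-`r` approximation of `Z`, then `σ_r(A)·σ_r(B) ≤ σ_r(Z)`,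
with equality when `AᵀA = BBᵀ`. -/
theorem stmt12 {a b r : ℕ} (hr : 0 < r) (hra : r ≤ a) (hrb : r ≤ b)
    (Z : Matrix (Fin a) (Fin b) ℝ)
    (A : Matrix (Fin a) (Fin r) ℝ) (B : Matrix (Fin r) (Fin b) ℝ)
    (hbest : ∀ C : Matrix (Fin a) (Fin b) ℝ, C.rank ≤ r →
      ∑ i, ∑ j, (Z i j - (A * B) i j) ^ 2 ≤ ∑ i, ∑ j, (Z i j - C i j) ^ 2) :
    sv A ⟨r - 1, Nat.sub_lt hr one_pos⟩ *
        sv B ⟨r - 1, lt_of_lt_of_le (Nat.sub_lt hr one_pos) hrb⟩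
      ≤ sv Z ⟨r - 1, lt_of_lt_of_le (Nat.sub_lt hr one_pos) hrb⟩ ∧
    (Aᵀ * A = B * Bᵀ →
      sv A ⟨r - 1, Nat.sub_lt hr one_pos⟩ *
          sv B ⟨r - 1, lt_of_lt_of_le (Nat.sub_lt hr one_pos) hrb⟩
        = sv Z ⟨r - 1, lt_of_lt_of_le (Nat.sub_lt hr one_pos) hrb⟩) :=
  stmt12_general hr hrb Z A B hbest
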